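/- arXiv:1206.2785 — 4 statements merged into one kernel-verified Lean document; each statement's English description precedes it below -/
import Mathlib

section
/- Let X and Y be real symmetric n×n matrices with Y positive definite, and set Z = X + iY as a complex n×n matrix. Then Z is invertible, and if Z⁻¹ = V + iW with V, W real, then W = −(X·Y⁻¹·X + Y)⁻¹ and V = Y⁻¹·X·(X·Y⁻¹·X + Y)⁻¹. -/
open Matrix Complex

/-!
Writing complex matrices as `A + iB` with `A, B` real, `(X + iY)(V + iW) = 1` amounts to the real
system `XV - YW = 1`, `XW + YV = 0`. Eliminating `V = -Y⁻¹XW` gives `(XY⁻¹X + Y)W = -1`, and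
`XY⁻¹X + Y` is positive definite (a positive semidefinite congruence of `Y⁻¹` plus `Y`), hence
invertible. The resulting right inverse of `X + iY` is its inverse.
-/

namespace Matrix

section Complexify

variable {l m n : Type*}

theorem ofReal_add_I_smul_mul [Fintype m] (A B : Matrix l m ℝ) (C D : Matrix m n ℝ) :
    (A.map ofReal + I • B.map ofReal) * (C.map ofReal + I • D.map ofReal) =
      (A * C - B * D).map ofReal + I • (A * D + B * C).map ofReal := by
  have map_mul (P : Matrix l m ℝ) (Q : Matrix m n ℝ) :
      (P * Q).map ofReal = P.map ofReal * Q.map ofReal :=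
    Matrix.map_mul (f := ofRealHom)
  simp only [Matrix.map_sub _ ofReal_sub, Matrix.map_add _ ofReal_add, map_mul, Matrix.add_mul,
    Matrix.mul_add, Matrix.smul_mul, Matrix.mul_smul, smul_smul, I_mul_I, neg_one_smul, smul_add]
  abel

@[simp]
theorem map_re_ofReal_add_I_smul (A B : Matrix m n ℝ) :
    (A.map ofReal + I • B.map ofReal).map re = A := by
  ext; simp

@[simp]
theorem map_im_ofReal_add_I_smul (A B : Matrix m n ℝ) :
    (A.map ofReal + I • B.map ofReal).map im = B := by
  ext; simp

end Complexify

theorem PosDef.mul_inv_mul_add {K n : Type*} [Field K] [PartialOrder K] [StarRing K]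
    [StarOrderedRing K] [Fintype n] [DecidableEq n] {X Y : Matrix n n K} (hY : Y.PosDef)
    (hX : X.IsHermitian) : (X * Y⁻¹ * X + Y).PosDef := by
  have hXYX : (X * Y⁻¹ * X).PosSemidef := by
    simpa only [hX.eq] using hY.inv.posSemidef.conjTranspose_mul_mul_same X
  exact PosDef.posSemidef_add hXYX hY

theorem ofReal_add_I_smul_mul_inv {n : Type*} [Fintype n] [DecidableEq n]
    (X Y : Matrix n n ℝ) (hY : IsUnit Y) (hS : IsUnit (X * Y⁻¹ * X + Y)) :
    (X.map ofReal + I • Y.map ofReal) *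
        ((Y⁻¹ * X * (X * Y⁻¹ * X + Y)⁻¹).map ofReal + I • (-(X * Y⁻¹ * X + Y)⁻¹).map ofReal) =
      1 := by
  set S := X * Y⁻¹ * X + Y with hSdef
  have hre : X * (Y⁻¹ * X * S⁻¹) - Y * -S⁻¹ = 1 := by
    calc X * (Y⁻¹ * X * S⁻¹) - Y * -S⁻¹ = S * S⁻¹ := by rw [hSdef]; noncomm_ring
      _ = 1 := mul_nonsing_inv S ((isUnit_iff_isUnit_det S).mp hS)
  have him : X * -S⁻¹ + Y * (Y⁻¹ * X * S⁻¹) = 0 := by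
    calc X * -S⁻¹ + Y * (Y⁻¹ * X * S⁻¹) = (Y * Y⁻¹ - 1) * (X * S⁻¹) := by noncomm_ring
      _ = 0 := by rw [mul_nonsing_inv Y ((isUnit_iff_isUnit_det Y).mp hY), sub_self, zero_mul]
  rw [ofReal_add_I_smul_mul, hre, him]
  simp

end Matrix

theorem inv_of_X_add_iY_general {n : ℕ} (X Y : Matrix (Fin n) (Fin n) ℝ)
    (hX : X.IsSymm) (hYpd : Y.PosDef) :
    IsUnit (X.map (Complex.ofReal) + Complex.I • Y.map (Complex.ofReal)) ∧
    ∀ V W : Matrix (Fin n) (Fin n) ℝ,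
      (X.map (Complex.ofReal) + Complex.I • Y.map (Complex.ofReal))⁻¹ =
        V.map (Complex.ofReal) + Complex.I • W.map (Complex.ofReal) →
      W = -(X * Y⁻¹ * X + Y)⁻¹ ∧ V = Y⁻¹ * X * (X * Y⁻¹ * X + Y)⁻¹ := by
  have hS : (X * Y⁻¹ * X + Y).PosDef := hYpd.mul_inv_mul_add (isHermitian_iff_isSymm.mpr hX)
  have hinv := ofReal_add_I_smul_mul_inv X Y hYpd.isUnit hS.isUnit
  refine ⟨(isUnit_iff_isUnit_det _).mpr (isUnit_det_of_right_inverse hinv), fun V W hVW => ?_⟩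
  rw [inv_eq_right_inv hinv] at hVW
  have hV := congrArg (Matrix.map · re) hVW
  have hW := congrArg (Matrix.map · im) hVW
  simp only [map_re_ofReal_add_I_smul, map_im_ofReal_add_I_smul] at hV hW
  exact ⟨hW.symm, hV.symm⟩

/-- For real symmetric `X, Y` with `Y` positive definite, the complex matrix
`Z = X + iY` is invertible, and if `Z⁻¹ = V + iW` with `V, W` real, then
`W = −(X·Y⁻¹·X + Y)⁻¹` and `V = Y⁻¹·X·(X·Y⁻¹·X + Y)⁻¹`. -/
theorem inv_of_X_add_iY {n : ℕ} (X Y : Matrix (Fin n) (Fin n) ℝ)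
    (hX : X.IsSymm) (hY : Y.IsSymm) (hYpd : Y.PosDef) :
    IsUnit (X.map (Complex.ofReal) + Complex.I • Y.map (Complex.ofReal)) ∧
    ∀ V W : Matrix (Fin n) (Fin n) ℝ,
      (X.map (Complex.ofReal) + Complex.I • Y.map (Complex.ofReal))⁻¹ =
        V.map (Complex.ofReal) + Complex.I • W.map (Complex.ofReal) →
      W = -(X * Y⁻¹ * X + Y)⁻¹ ∧ V = Y⁻¹ * X * (X * Y⁻¹ * X + Y)⁻¹ :=
  inv_of_X_add_iY_general X Y hX hYpd
end

section
/- Let Y be a real symmetric n×n matrix. There exists a nonzero real vector x with xᵀY = 0 if and only if det Y = 0. Consequently, for X real symmetric and Z = X + iY, the spans of the rows wᵢ = pᵢ + Σⱼ Zᵢⱼ qⱼ and their conjugates w̄ᵢ = pᵢ + Σⱼ Z̄ᵢⱼ qⱼ (where (p,q) is a basis of a 2n-dimensional space) intersect nontrivially if and only if det Y = 0. -/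
/-! A vector in both spans is `∑ aᵢ wᵢ = ∑ cᵢ w̄ᵢ`. Its `p`-coordinates give `a = c`, and then
its `q`-coordinates give `aᵀ Z = aᵀ Z̄`, i.e. `aᵀ (Z - Z̄) = 2i aᵀ Y = 0`. So the spans meet
nontrivially exactly when `Z - Z̄ = 2i Y` is singular. -/

open Matrix Complex

namespace Module.Basis

variable {V ι κ : Type*} [AddCommMonoid V]

section Semiring

variable {R : Type*} [Semiring R] [Module R V] [Fintype κ]

/-- The rows of the block matrix `[1 | M]` with respect to `b`. -/
noncomputable def graphRows (b : Basis (ι ⊕ κ) R V) (M : Matrix ι κ R) (i : ι) : V :=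
  b (Sum.inl i) + ∑ j, M i j • b (Sum.inr j)

variable [Fintype ι] (b : Basis (ι ⊕ κ) R V)

theorem sum_smul_graphRows (M : Matrix ι κ R) (a : ι → R) :
    ∑ i, a i • b.graphRows M i = b.equivFun.symm (Sum.elim a (a ᵥ* M)) := by
  simp only [graphRows, equivFun_symm_apply, Fintype.sum_sum_type, Sum.elim_inl, Sum.elim_inr,
    smul_add, Finset.sum_add_distrib, Finset.smul_sum, smul_smul, vecMul, dotProduct,
    Finset.sum_smul]
  rw [Finset.sum_comm]

theorem mem_span_graphRows_iff {M : Matrix ι κ R} {v : V} :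
    v ∈ Submodule.span R (Set.range (b.graphRows M)) ↔
      ∃ a, b.equivFun.symm (Sum.elim a (a ᵥ* M)) = v := by
  simp only [Submodule.mem_span_range_iff_exists_fun, sum_smul_graphRows]

theorem span_graphRows_inf_ne_bot_iff_exists_vecMul_eq (M N : Matrix ι κ R) :
    Submodule.span R (Set.range (b.graphRows M)) ⊓ Submodule.span R (Set.range (b.graphRows N))
      ≠ ⊥ ↔ ∃ a ≠ 0, a ᵥ* M = a ᵥ* N := by
  simp only [Submodule.ne_bot_iff, Submodule.mem_inf, mem_span_graphRows_iff]
  constructor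
  · rintro ⟨-, ⟨⟨a, rfl⟩, ⟨c, hc⟩⟩, hv⟩
    obtain ⟨rfl, hMN⟩ := Sum.elim_eq_iff.mp (b.equivFun.symm.injective hc.symm)
    refine ⟨a, ?_, hMN⟩
    rintro rfl
    simp at hv
  · rintro ⟨a, ha, hMN⟩
    refine ⟨_, ⟨⟨a, rfl⟩, ⟨a, by rw [hMN]⟩⟩, ?_⟩
    rw [Ne, LinearEquiv.map_eq_zero_iff]
    exact fun h ↦ ha (by simpa using congr_arg (· ∘ Sum.inl) h)

end Semiring

theorem span_graphRows_inf_ne_bot_iff_det_sub_eq_zero {K : Type*} [Field K] [Module K V]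
    [Fintype ι] [DecidableEq ι] (b : Basis (ι ⊕ ι) K V) (M N : Matrix ι ι K) :
    Submodule.span K (Set.range (b.graphRows M)) ⊓ Submodule.span K (Set.range (b.graphRows N))
      ≠ ⊥ ↔ (M - N).det = 0 := by
  simp only [span_graphRows_inf_ne_bot_iff_exists_vecMul_eq, ← exists_vecMul_eq_zero_iff,
    vecMul_sub, sub_eq_zero]

end Module.Basis

theorem spans_intersect_iff_det_eq_zero_general {n : ℕ} (X Y : Matrix (Fin n) (Fin n) ℝ) :
    ((∃ x : Fin n → ℝ, x ≠ 0 ∧ Matrix.vecMul x Y = 0) ↔ Y.det = 0) ∧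
    (∀ (V : Type) (_ : AddCommGroup V) (_ : Module ℂ V) (b : Module.Basis (Fin n ⊕ Fin n) ℂ V)
      (w wbar : Fin n → V),
      (∀ i, w i = b (Sum.inl i) +
          ∑ j, ((X i j : ℂ) + Complex.I * (Y i j : ℂ)) • b (Sum.inr j)) →
      (∀ i, wbar i = b (Sum.inl i) +
          ∑ j, ((X i j : ℂ) - Complex.I * (Y i j : ℂ)) • b (Sum.inr j)) →
      (Submodule.span ℂ (Set.range w) ⊓ Submodule.span ℂ (Set.range wbar) ≠ ⊥ ↔
        Y.det = 0)) := by
  refine ⟨exists_vecMul_eq_zero_iff, fun V _ _ b w wbar hw hwbar ↦ ?_⟩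
  obtain rfl : w = b.graphRows (of fun i j ↦ (X i j : ℂ) + I * Y i j) := funext hw
  obtain rfl : wbar = b.graphRows (of fun i j ↦ (X i j : ℂ) - I * Y i j) := funext hwbar
  have hsub : (of fun i j ↦ (X i j : ℂ) + I * Y i j) - of (fun i j ↦ (X i j : ℂ) - I * Y i j)
      = (2 * I) • ofRealHom.mapMatrix Y := by
    ext i j
    simp only [Matrix.sub_apply, of_apply, Matrix.smul_apply, RingHom.mapMatrix_apply, map_apply,
      ofRealHom_eq_coe, smul_eq_mul]
    ring
  rw [b.span_graphRows_inf_ne_bot_iff_det_sub_eq_zero, hsub, det_smul, ← RingHom.map_det]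
  simp [I_ne_zero]

/-- For `Y` real symmetric: there is a nonzero real vector `x` with `xᵀY = 0` iff
`det Y = 0`; and, for `X` real symmetric and `Z = X + iY`, the spans of the
vectors `wᵢ = pᵢ + Σⱼ Zᵢⱼ qⱼ` and of their conjugates `w̄ᵢ = pᵢ + Σⱼ Z̄ᵢⱼ qⱼ`
(in a `2n`-dimensional space with basis `(p, q)`) intersect nontrivially iff
`det Y = 0`. -/
theorem spans_intersect_iff_det_eq_zero {n : ℕ} (X Y : Matrix (Fin n) (Fin n) ℝ)
    (hX : X.IsSymm) (hY : Y.IsSymm) :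
    ((∃ x : Fin n → ℝ, x ≠ 0 ∧ Matrix.vecMul x Y = 0) ↔ Y.det = 0) ∧
    (∀ (V : Type) (_ : AddCommGroup V) (_ : Module ℂ V) (b : Module.Basis (Fin n ⊕ Fin n) ℂ V)
      (w wbar : Fin n → V),
      (∀ i, w i = b (Sum.inl i) +
          ∑ j, ((X i j : ℂ) + Complex.I * (Y i j : ℂ)) • b (Sum.inr j)) →
      (∀ i, wbar i = b (Sum.inl i) +
          ∑ j, ((X i j : ℂ) - Complex.I * (Y i j : ℂ)) • b (Sum.inr j)) →
      (Submodule.span ℂ (Set.range w) ⊓ Submodule.span ℂ (Set.range wbar) ≠ ⊥ ↔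
        Y.det = 0)) :=
  spans_intersect_iff_det_eq_zero_general X Y
end

section
/- Define the quantum integer [n] = sin(nπ/r)/sin(π/r) for an integer r ≥ 3. Then 𝒟 := √(Σ_{n=0}^{k} [n+1]²) = √((k+2)/2) · 1/sin(π/(k+2)), where r = k+2. -/
open Real Finset

lemma cos_sum_zero (r : ℕ) (hr : 2 ≤ r) :
    ∑ m ∈ Finset.range r, Real.cos (2 * π * m / r) = 0 := by
  have hprim := Complex.isPrimitiveRoot_exp r (by omega)
  have hsum := hprim.geom_sum_eq_zero (by omega)
  have key : ∀ m : ℕ, (Complex.exp (2 * π * Complex.I / r)) ^ m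
      = Complex.exp (((2 * π * m / r : ℝ) : ℂ) * Complex.I) := by
    intro m
    rw [← Complex.exp_nat_mul]
    push_cast
    ring_nf
  have : (∑ m ∈ Finset.range r, (Complex.exp (2 * π * Complex.I / r)) ^ m).re = 0 := by
    rw [hsum]; simp
  rw [Complex.re_sum] at this
  convert this using 2 with m
  rw [key m, Complex.exp_ofReal_mul_I_re]

lemma sin_sq_sum (k : ℕ) :
    ∑ n ∈ Finset.range (k + 1), Real.sin ((n + 1) * π / (k + 2)) ^ 2 = (k + 2) / 2 := by
  have hc := cos_sum_zero (k + 2) (by omega)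
  rw [show k + 2 = (k + 1) + 1 from rfl, Finset.sum_range_succ'] at hc
  simp only [Nat.cast_zero, mul_zero, zero_div, Real.cos_zero] at hc
  have hc' : ∑ m ∈ Finset.range (k + 1), Real.cos (2 * π * (m + 1) / (k + 2)) = -1 := by
    push_cast at hc
    have e : ∀ x ∈ Finset.range (k + 1),
        Real.cos (2 * π * ((x : ℝ) + 1) / ((k : ℝ) + 1 + 1))
          = Real.cos (2 * π * ((x : ℝ) + 1) / ((k : ℝ) + 2)) := by
      intro x _; norm_num [add_assoc]
    rw [Finset.sum_congr rfl e] at hc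
    linarith
  have : ∀ n ∈ Finset.range (k + 1),
      Real.sin ((n + 1) * π / (k + 2)) ^ 2
        = 1 / 2 - Real.cos (2 * π * (n + 1) / (k + 2)) / 2 := by
    intro n _
    rw [Real.sin_sq_eq_half_sub]
    ring_nf
  rw [Finset.sum_congr rfl this, Finset.sum_sub_distrib, Finset.sum_const, ← Finset.sum_div, hc']
  simp
  ring

/-- With quantum integers `[m] = sin(mπ/r)/sin(π/r)` and `r = k + 2`,
`√(Σ_{n=0}^{k} [n+1]²) = √((k+2)/2) · 1/sin(π/(k+2))`. -/
theorem rank_modular_category_formula (k : ℕ) (hk : 1 ≤ k) :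
    Real.sqrt (∑ n ∈ Finset.range (k + 1),
        (Real.sin ((n + 1) * Real.pi / (k + 2)) / Real.sin (Real.pi / (k + 2))) ^ 2) =
      Real.sqrt ((k + 2) / 2) * (1 / Real.sin (Real.pi / (k + 2))) := by
  have hs : 0 < Real.sin (π / (k + 2)) := by
    apply Real.sin_pos_of_pos_of_lt_pi
    · positivity
    · rw [div_lt_iff₀ (by positivity)]
      nlinarith [Real.pi_pos]
  have h1 : ∑ n ∈ Finset.range (k + 1),
      (Real.sin ((n + 1) * π / (k + 2)) / Real.sin (π / (k + 2))) ^ 2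
      = ((k + 2) / 2) * (1 / Real.sin (π / (k + 2))) ^ 2 := by
    rw [← sin_sq_sum k, Finset.sum_mul]
    apply Finset.sum_congr rfl
    intro n _
    field_simp
  rw [h1, Real.sqrt_mul (by positivity), Real.sqrt_sq (by positivity)]
end

section
/- Let a, b, c, d ∈ ℝ and A, B, C, D ∈ SU(2) with ABCD = Id, a = Tr A, b = Tr B, c = Tr C, d = Tr D, x = Tr(AB), y = Tr(BC), z = Tr(AC). Then x² + y² + z² + xyz = (ab+cd)x + (ad+bc)y + (ac+bd)z − (a² + b² + c² + d² + abcd − 4). -/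
open Matrix

/-- For `A, B, C, D ∈ SU(2)` with `ABCD = Id` and trace coordinates
`a,b,c,d,x,y,z`, one has
`x² + y² + z² + xyz = (ab+cd)x + (ad+bc)y + (ac+bd)z − (a²+b²+c²+d²+abcd−4)`. -/
theorem four_punctured_sphere_trace_identity (A B C D : Matrix (Fin 2) (Fin 2) ℂ)
    (hA : A ∈ Matrix.specialUnitaryGroup (Fin 2) ℂ)
    (hB : B ∈ Matrix.specialUnitaryGroup (Fin 2) ℂ)
    (hC : C ∈ Matrix.specialUnitaryGroup (Fin 2) ℂ)
    (hD : D ∈ Matrix.specialUnitaryGroup (Fin 2) ℂ)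
    (hrel : A * B * C * D = 1)
    (a b c d x y z : ℝ)
    (ha : (a : ℂ) = Matrix.trace A) (hb : (b : ℂ) = Matrix.trace B)
    (hc : (c : ℂ) = Matrix.trace C) (hd : (d : ℂ) = Matrix.trace D)
    (hx : (x : ℂ) = Matrix.trace (A * B)) (hy : (y : ℂ) = Matrix.trace (B * C))
    (hz : (z : ℂ) = Matrix.trace (A * C)) :
    x ^ 2 + y ^ 2 + z ^ 2 + x * y * z =
      (a * b + c * d) * x + (a * d + b * c) * y + (a * c + b * d) * z -
        (a ^ 2 + b ^ 2 + c ^ 2 + d ^ 2 + a * b * c * d - 4) := by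
  have hdA : A.det = 1 := ((Matrix.mem_specialUnitaryGroup_iff).mp hA).2
  have hdB : B.det = 1 := ((Matrix.mem_specialUnitaryGroup_iff).mp hB).2
  have hdC : C.det = 1 := ((Matrix.mem_specialUnitaryGroup_iff).mp hC).2
  have hdABC : (A * B * C).det = 1 := by
    rw [Matrix.det_mul, Matrix.det_mul, hdA, hdB, hdC]; ring
  have hDinv : (A * B * C)⁻¹ = D := Matrix.inv_eq_right_inv hrel
  have htrD : Matrix.trace D = Matrix.trace (A * B * C) := by
    rw [← hDinv, Matrix.inv_def, hdABC]
    simp [Matrix.adjugate_fin_two, Matrix.trace_fin_two]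
    ring
  have hdA' : A 0 0 * A 1 1 - A 0 1 * A 1 0 = 1 := by
    rw [← Matrix.det_fin_two]; exact hdA
  have hdB' : B 0 0 * B 1 1 - B 0 1 * B 1 0 = 1 := by
    rw [← Matrix.det_fin_two]; exact hdB
  have hdC' : C 0 0 * C 1 1 - C 0 1 * C 1 0 = 1 := by
    rw [← Matrix.det_fin_two]; exact hdC
  have key : (x:ℂ) ^ 2 + y ^ 2 + z ^ 2 + x * y * z =
      (a * b + c * d) * x + (a * d + b * c) * y + (a * c + b * d) * z -
        (a ^ 2 + b ^ 2 + c ^ 2 + d ^ 2 + a * b * c * d - 4) := by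
    rw [ha, hb, hc, hd, hx, hy, hz, htrD]
    simp only [Matrix.trace_fin_two, Matrix.mul_apply, Fin.sum_univ_two]
    linear_combination ((2) + (-1) * (C 1 1) * (C 1 1) + (-1) * (C 0 0) * (C 0 0) + (-1) * (B 1 1) * (B 1 1) + (1) * (B 1 1) * (B 1 1) * (C 0 0) * (C 1 1) + (-1) * (B 1 0) * (B 1 1) * (C 0 1) * (C 1 1) + (1) * (B 1 0) * (B 1 1) * (C 0 0) * (C 0 1) + (-1) * (B 1 0) * (B 1 0) * (C 0 1) * (C 0 1) + (-1) * (B 0 1) * (B 1 1) * (C 1 0) * (C 1 1) + (1) * (B 0 1) * (B 1 1) * (C 0 0) * (C 1 0) + (-1) * (B 0 1) * (B 0 1) * (C 1 0) * (C 1 0) + (1) * (B 0 0) * (B 1 1) * (C 1 1) * (C 1 1) + (-2) * (B 0 0) * (B 1 1) * (C 0 0) * (C 1 1) + (1) * (B 0 0) * (B 1 1) * (C 0 0) * (C 0 0) + (1) * (B 0 0) * (B 1 0) * (C 0 1) * (C 1 1) + (-1) * (B 0 0) * (B 1 0) * (C 0 0) * (C 0 1) + (1) * (B 0 0) * (B 0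 1) * (C 1 0) * (C 1 1) + (-1) * (B 0 0) * (B 0 1) * (C 0 0) * (C 1 0) + (-1) * (B 0 0) * (B 0 0) + (1) * (B 0 0) * (B 0 0) * (C 0 0) * (C 1 1)) * hdA' + ((2) + (-2) * (C 0 0) * (C 1 1) + (-1) * (A 1 1) * (A 1 1) + (1) * (A 1 1) * (A 1 1) * (C 0 0) * (C 1 1) + (-1) * (A 1 0) * (A 1 1) * (C 0 1) * (C 1 1) + (1) * (A 1 0) * (A 1 1) * (C 0 0) * (C 0 1) + (-1) * (A 1 0) * (A 1 0) * (C 0 1) * (C 0 1) + (-1) * (A 0 1) * (A 1 1) * (C 1 0) * (C 1 1) + (1) * (A 0 1) * (A 1 1) * (C 0 0) * (C 1 0) + (1) * (A 0 1) * (A 1 0) * (C 1 1) * (C 1 1) + (-2) * (A 0 1) * (A 1 0) * (C 0 0) * (C 1 1) + (1) * (A 0 1) * (A 1 0) * (C 0 0) * (C 0 0) + (-1) * (A 0 1) * (A 0 1) * (C 1 0) * (C 1 0) + (1) * (A 0 0) * (A 1 0) * (C 0 1) * (C 1 1) + (-1) * (A 0 0) * (A 1 0) * (C 0 0) * (C 0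 1) + (1) * (A 0 0) * (A 0 1) * (C 1 0) * (C 1 1) + (-1) * (A 0 0) * (A 0 1) * (C 0 0) * (C 1 0) + (-1) * (A 0 0) * (A 0 0) + (1) * (A 0 0) * (A 0 0) * (C 0 0) * (C 1 1)) * hdB' + ((-2) * (B 0 1) * (B 1 0) + (1) * (A 1 1) * (A 1 1) * (B 0 1) * (B 1 0) + (-1) * (A 1 0) * (A 1 1) * (B 0 1) * (B 1 1) + (1) * (A 1 0) * (A 1 1) * (B 0 0) * (B 0 1) + (-1) * (A 1 0) * (A 1 0) * (B 0 1) * (B 0 1) + (-1) * (A 0 1) * (A 1 1) * (B 1 0) * (B 1 1) + (1) * (A 0 1) * (A 1 1) * (B 0 0) * (B 1 0) + (-2) * (A 0 1) * (A 1 0) + (1) * (A 0 1) * (A 1 0) * (B 1 1) * (B 1 1) + (-2) * (A 0 1) * (A 1 0) * (B 0 1) * (B 1 0) + (1) * (A 0 1) * (A 1 0) * (B 0 0) * (B 0 0) + (-1) * (A 0 1) * (A 0 1) * (B 1 0) * (B 1 0) + (1) * (A 0 0) * (A 1 0) * (B 0 1) * (B 1 1) + (-1) * (A 0 0) * (A 1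 0) * (B 0 0) * (B 0 1) + (1) * (A 0 0) * (A 0 1) * (B 1 0) * (B 1 1) + (-1) * (A 0 0) * (A 0 1) * (B 0 0) * (B 1 0) + (1) * (A 0 0) * (A 0 0) * (B 0 1) * (B 1 0)) * hdC'
  exact_mod_cast key
end
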